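/- Let (L,[-,-],{-,-,-}) be a Lie-Yamaguti algebra, T : L → L a Rota-Baxter operator of weight -1, and (V; ρ, θ, D, T_V) a representation of the Rota-Baxter Lie-Yamaguti algebra (L,T) of weight -1. Then (V; ρ, θ, D, 2T_V - id_V) is a representation of the modified Rota-Baxter Lie-Yamaguti algebra (L, 2T - id_L); in particular 2T - id_L is a modified Rota-Baxter operator on L and equations (4.1) and (4.2) hold with R := 2T - id_L and R_V := 2T_V - id_V. -/

import Mathlib

/-- A Lie-Yamaguti algebra: bilinear bracket `br`, trilinear bracket `tr`,
satisfying (LY1)-(LY6). -/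
structure LieYamaguti (K : Type*) (L : Type*) [Field K] [AddCommGroup L] [Module K L] where
  br : L →ₗ[K] L →ₗ[K] L
  tr : L →ₗ[K] L →ₗ[K] L →ₗ[K] L
  ly1 : ∀ x y, br x y = - br y x
  ly2 : ∀ x y z, tr x y z = - tr y x z
  ly3 : ∀ x y z,
    br (br x y) z + br (br y z) x + br (br z x) y + tr x y z + tr y z x + tr z x y = 0
  ly4 : ∀ x y z a, tr (br x y) z a + tr (br z x) y a + tr (br y z) x a = 0
  ly5 : ∀ a b x y, tr a b (br x y) = br (tr a b x) y + br x (tr a b y)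
  ly6 : ∀ a b x y z,
    tr a b (tr x y z) = tr (tr a b x) y z + tr x (tr a b y) z + tr x y (tr a b z)

/-- A modified Rota-Baxter operator on a Lie-Yamaguti algebra. -/
def IsMRB {K L : Type*} [Field K] [AddCommGroup L] [Module K L]
    (A : LieYamaguti K L) (R : L →ₗ[K] L) : Prop :=
  (∀ x y, A.br (R x) (R y) = R (A.br (R x) y + A.br x (R y)) - A.br x y) ∧
  (∀ x y z, A.tr (R x) (R y) (R z) =
      R (A.tr x (R y) (R z) + A.tr (R x) y (R z) + A.tr (R x) (R y) z + A.tr x y z)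
      - A.tr (R x) y z - A.tr x (R y) z - A.tr x y (R z))

/-- A Rota-Baxter operator of weight -1 on a Lie-Yamaguti algebra. -/
def IsRBWeightNegOne {K L : Type*} [Field K] [AddCommGroup L] [Module K L]
    (A : LieYamaguti K L) (T : L →ₗ[K] L) : Prop :=
  (∀ x y, A.br (T x) (T y) = T (A.br (T x) y + A.br x (T y) - A.br x y)) ∧
  (∀ x y z, A.tr (T x) (T y) (T z) =
      T (A.tr x (T y) (T z) + A.tr (T x) y (T z) + A.tr (T x) (T y) z
        - A.tr x y (T z) - A.tr (T x) y z - A.tr x (T y) z + A.tr x y z))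

/-- A representation of a Lie-Yamaguti algebra on `V`, axioms (R1)-(R7). -/
structure LYRep (K L V : Type*) [Field K] [AddCommGroup L] [Module K L]
    [AddCommGroup V] [Module K V] (A : LieYamaguti K L) where
  ρ : L →ₗ[K] Module.End K V
  θ : L →ₗ[K] L →ₗ[K] Module.End K V
  D : L →ₗ[K] L →ₗ[K] Module.End K V
  r1 : ∀ x y, D x y - θ y x + θ x y + ρ (A.br x y) - ρ x * ρ y + ρ y * ρ x = 0
  r2 : ∀ x y z, D (A.br x y) z + D (A.br y z) x + D (A.br z x) y = 0
  r3 : ∀ x y a, θ (A.br x y) a = θ x a * ρ y - θ y a * ρ x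
  r4 : ∀ a b x, D a b * ρ x = ρ x * D a b + ρ (A.tr a b x)
  r5 : ∀ x a b, θ x (A.br a b) = ρ a * θ x b - ρ b * θ x a
  r6 : ∀ a b x y, D a b * θ x y = θ x y * D a b + θ (A.tr a b x) y + θ x (A.tr a b y)
  r7 : ∀ a x y z, θ a (A.tr x y z) = θ y z * θ a x - θ x z * θ a y + D x y * θ a z

/-!
Put `S = 2T - id`. Expanding `f (S x) (S y)` (resp. `f (S x) (S y) (S z)`) multilinearly, the
only term in which every argument is moved by `T` is `4 f (T x) (T y)` (resp.
`8 f (T x) (T y) (T z)`); rewriting it with the weight `-1` Rota-Baxter identity turns both sides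
of the modified identity into the same linear combination. Only multilinearity is involved, so
the same computation applies to the brackets of `L` and to the actions `ρ`, `θ` of `L` on `V`.
-/

section MultilinearRotaBaxter

variable {R M N P Q : Type*} [CommRing R] [AddCommGroup M] [Module R M] [AddCommGroup N]
  [Module R N] [AddCommGroup P] [Module R P] [AddCommGroup Q] [Module R Q]

theorem modifiedRotaBaxter₂_two_smul_sub_id (f : M →ₗ[R] N →ₗ[R] P) (a : M →ₗ[R] M)
    (b : N →ₗ[R] N) (c : P →ₗ[R] P)
    (h : ∀ x y, f (a x) (b y) = c (f (a x) y + f x (b y) - f x y))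
    (a' : M →ₗ[R] M) (b' : N →ₗ[R] N) (c' : P →ₗ[R] P) (ha : a' = (2 : R) • a - LinearMap.id)
    (hb : b' = (2 : R) • b - LinearMap.id) (hc : c' = (2 : R) • c - LinearMap.id) :
    ∀ x y, f (a' x) (b' y) = c' (f (a' x) y + f x (b' y)) - f x y := by
  subst ha hb hc
  intro x y
  simp only [LinearMap.sub_apply, LinearMap.smul_apply, LinearMap.id_apply, map_add,
    map_sub, map_smul, h]
  module

theorem modifiedRotaBaxter₃_two_smul_sub_id (f : M →ₗ[R] N →ₗ[R] P →ₗ[R] Q) (a : M →ₗ[R] M)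
    (b : N →ₗ[R] N) (c : P →ₗ[R] P) (d : Q →ₗ[R] Q)
    (h : ∀ x y z, f (a x) (b y) (c z) = d (f x (b y) (c z) + f (a x) y (c z) + f (a x) (b y) z
      - f x y (c z) - f (a x) y z - f x (b y) z + f x y z))
    (a' : M →ₗ[R] M) (b' : N →ₗ[R] N) (c' : P →ₗ[R] P) (d' : Q →ₗ[R] Q)
    (ha : a' = (2 : R) • a - LinearMap.id) (hb : b' = (2 : R) • b - LinearMap.id)
    (hc : c' = (2 : R) • c - LinearMap.id) (hd : d' = (2 : R) • d - LinearMap.id) :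
    ∀ x y z, f (a' x) (b' y) (c' z)
      = d' (f x (b' y) (c' z) + f (a' x) y (c' z) + f (a' x) (b' y) z + f x y z)
        - f (a' x) y z - f x (b' y) z - f x y (c' z) := by
  subst ha hb hc hd
  intro x y z
  simp only [LinearMap.sub_apply, LinearMap.smul_apply, LinearMap.id_apply, map_add,
    map_sub, map_smul, h]
  module

end MultilinearRotaBaxter

theorem rbRep_to_mrbRep_general (K L V : Type*) [Field K]
    [AddCommGroup L] [Module K L] [AddCommGroup V] [Module K V]
    (A : LieYamaguti K L) (T : L →ₗ[K] L) (hT : IsRBWeightNegOne A T)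
    (rep : LYRep K L V A) (TV : V →ₗ[K] V)
    (h44 : ∀ (x : L) (u : V),
      rep.ρ (T x) (TV u) = TV (rep.ρ (T x) u + rep.ρ x (TV u) - rep.ρ x u))
    (h45 : ∀ (x y : L) (u : V),
      rep.θ (T x) (T y) (TV u)
        = TV (rep.θ (T x) (T y) u + rep.θ (T x) y (TV u) + rep.θ x (T y) (TV u)
            - rep.θ (T x) y u - rep.θ x (T y) u - rep.θ x y (TV u) + rep.θ x y u)) :
    ∀ (S : L →ₗ[K] L) (SV : V →ₗ[K] V),
      S = (2 : K) • T - LinearMap.id → SV = (2 : K) • TV - LinearMap.id →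
      IsMRB A S ∧
      (∀ (x : L) (u : V),
        rep.ρ (S x) (SV u) = SV (rep.ρ (S x) u + rep.ρ x (SV u)) - rep.ρ x u) ∧
      (∀ (x y : L) (u : V),
        rep.θ (S x) (S y) (SV u)
          = SV (rep.θ (S x) (S y) u + rep.θ (S x) y (SV u) + rep.θ x (S y) (SV u)
              + rep.θ x y u)
            - rep.θ (S x) y u - rep.θ x y (SV u) - rep.θ x (S y) u) := by
  intro S SV hS hSV
  have hθ : ∀ x y u, rep.θ (T x) (T y) (TV u) = TV (rep.θ x (T y) (TV u)
      + rep.θ (T x) y (TV u) + rep.θ (T x) (T y) u - rep.θ x y (TV u) - rep.θ (T x) y u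
      - rep.θ x (T y) u + rep.θ x y u) := fun x y u => by
    rw [h45]
    congr 1
    abel
  refine ⟨⟨modifiedRotaBaxter₂_two_smul_sub_id A.br T T T hT.1 S S S hS hS hS,
      modifiedRotaBaxter₃_two_smul_sub_id A.tr T T T T hT.2 S S S S hS hS hS hS⟩,
    modifiedRotaBaxter₂_two_smul_sub_id rep.ρ T TV TV h44 S SV SV hS hSV hSV, fun x y u => ?_⟩
  rw [modifiedRotaBaxter₃_two_smul_sub_id rep.θ T T TV TV hθ S S SV SV hS hS hSV hSV,
    sub_right_comm _ (rep.θ x (S y) u)]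
  congr 3
  exact congrArg SV (by abel)

/-- If `(V; ρ, θ, D, T_V)` is a representation of the Rota-Baxter Lie-Yamaguti algebra
`(L,T)` of weight -1, then `(V; ρ, θ, D, 2T_V - id)` is a representation of the modified
Rota-Baxter Lie-Yamaguti algebra `(L, 2T - id)`: `2T - id` is a modified Rota-Baxter
operator, and (4.1), (4.2) hold with `R := 2T - id` and `R_V := 2T_V - id`. -/
theorem rbRep_to_mrbRep (K L V : Type*) [Field K] [CharZero K]
    [AddCommGroup L] [Module K L] [AddCommGroup V] [Module K V]
    (A : LieYamaguti K L) (T : L →ₗ[K] L) (hT : IsRBWeightNegOne A T)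
    (rep : LYRep K L V A) (TV : V →ₗ[K] V)
    (h44 : ∀ (x : L) (u : V),
      rep.ρ (T x) (TV u) = TV (rep.ρ (T x) u + rep.ρ x (TV u) - rep.ρ x u))
    (h45 : ∀ (x y : L) (u : V),
      rep.θ (T x) (T y) (TV u)
        = TV (rep.θ (T x) (T y) u + rep.θ (T x) y (TV u) + rep.θ x (T y) (TV u)
            - rep.θ (T x) y u - rep.θ x (T y) u - rep.θ x y (TV u) + rep.θ x y u)) :
    ∀ (S : L →ₗ[K] L) (SV : V →ₗ[K] V),
      S = (2 : K) • T - LinearMap.id → SV = (2 : K) • TV - LinearMap.id →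
      IsMRB A S ∧
      (∀ (x : L) (u : V),
        rep.ρ (S x) (SV u) = SV (rep.ρ (S x) u + rep.ρ x (SV u)) - rep.ρ x u) ∧
      (∀ (x y : L) (u : V),
        rep.θ (S x) (S y) (SV u)
          = SV (rep.θ (S x) (S y) u + rep.θ (S x) y (SV u) + rep.θ x (S y) (SV u)
              + rep.θ x y u)
            - rep.θ (S x) y u - rep.θ x y (SV u) - rep.θ x (S y) u) :=
  rbRep_to_mrbRep_general K L V A T hT rep TV h44 h45
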